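/- arXiv:1802.09952 — 6 statements merged into one kernel-verified Lean document; each statement's English description precedes it below -/
import Mathlib

section
/- Let W denote the principal branch of the Lambert-W function (so W(x)·e^{W(x)} = x for x > 0) and Φ_d the unique positive root of (x+1)^d = x^(d+1). Then for every integer d ≥ 2, Φ_d ≤ (ln d / W(d)) · (d / ln d) = d / W(d). -/
theorem stmt10 (d : ℕ) (hd : 2 ≤ d) (Φ : ℝ) (hΦ : 0 < Φ)
    (hroot : (Φ + 1) ^ d = Φ ^ (d + 1))
    (w : ℝ) (hw : 0 < w) (hlamb : w * Real.exp w = d) :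
    Φ ≤ (Real.log d / w) * ((d : ℝ) / Real.log d) ∧
    (Real.log d / w) * ((d : ℝ) / Real.log d) = (d : ℝ) / w := by
  set t := Real.exp w with ht_def
  have ht0 : 0 < t := Real.exp_pos w
  have ht1 : 1 < t := by rw [ht_def, show (1:ℝ) = Real.exp 0 from Real.exp_zero.symm]; exact Real.exp_lt_exp.mpr hw
  have hdt : (d : ℝ) = w * t := hlamb.symm
  have hdpos : (0:ℝ) < d := by positivity
  have hd1 : (1:ℝ) < d := by exact_mod_cast hd.trans_lt' one_lt_two
  have hlogd : 0 < Real.log d := Real.log_pos hd1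
  -- key log inequality
  have hlog1 : Real.log (t + 1) ≤ Real.log t + 1 / t := by
    have h1 : Real.log ((t + 1) / t) ≤ (t + 1) / t - 1 :=
      Real.log_le_sub_one_of_pos (by positivity)
    have h2 : Real.log ((t + 1) / t) = Real.log (t + 1) - Real.log t :=
      Real.log_div (by positivity) (by positivity)
    have h3 : (t + 1) / t - 1 = 1 / t := by field_simp; ring
    linarith [h2 ▸ h3 ▸ h1]
  have hlogkey : (d : ℝ) * Real.log (t + 1) ≤ (d + 1) * Real.log t := by
    have h4 : (d : ℝ) * Real.log (t + 1) ≤ d * (Real.log t + 1 / t) := by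
      apply mul_le_mul_of_nonneg_left hlog1 hdpos.le
    have h5 : (d : ℝ) / t = w := by rw [hdt]; field_simp
    have h6 : Real.log t = w := Real.log_exp w
    have : (d : ℝ) * (Real.log t + 1 / t) = (d + 1) * Real.log t := by
      rw [h6]; field_simp; linarith [h5]
    linarith
  -- key inequality : (t+1)^d ≤ t^(d+1)
  have hkey : (t + 1) ^ d ≤ t ^ (d + 1) := by
    have hp1 : (0:ℝ) < (t + 1) ^ d := by positivity
    have hp2 : (0:ℝ) < t ^ (d + 1) := by positivity
    rw [← Real.log_le_log_iff hp1 hp2, Real.log_pow, Real.log_pow]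
    push_cast
    linarith
  -- Φ ≤ t
  have hΦt : Φ ≤ t := by
    by_contra h
    push_neg at h
    have hlt : (Φ + 1) * t < (t + 1) * Φ := by nlinarith
    have hlt2 : ((Φ + 1) * t) ^ d < ((t + 1) * Φ) ^ d := by
      apply pow_lt_pow_left₀ hlt (by positivity) (by omega)
    have hlt3 : (Φ + 1) ^ d * t ^ (d + 1) < (t + 1) ^ d * Φ ^ (d + 1) := by
      have e1 : (Φ + 1) ^ d * t ^ (d + 1) = ((Φ + 1) * t) ^ d * t := by
        rw [mul_pow, pow_succ]; ring
      have e2 : (t + 1) ^ d * Φ ^ (d + 1) = ((t + 1) * Φ) ^ d * Φ := by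
        rw [mul_pow, pow_succ]; ring
      rw [e1, e2]
      have ht' : t < Φ := h
      have h0 : (0:ℝ) < ((Φ + 1) * t) ^ d := by positivity
      nlinarith [hlt2, h0]
    rw [hroot] at hlt3
    have hΦp : (0:ℝ) < Φ ^ (d + 1) := by positivity
    have : t ^ (d + 1) < (t + 1) ^ d := by
      have := (mul_lt_mul_iff_right₀ hΦp).mp (by linarith [hlt3] : Φ ^ (d+1) * t ^ (d+1) < Φ ^ (d+1) * (t + 1) ^ d)
      linarith
    linarith
  have heq : (Real.log d / w) * ((d : ℝ) / Real.log d) = (d : ℝ) / w := by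
    field_simp
  refine ⟨?_, heq⟩
  rw [heq, hdt, mul_comm w t, mul_div_assoc, div_self hw.ne', mul_one]
  exact hΦt
end

section
/- Let Φ_d be the unique positive root of (x+1)^d = x^(d+1). Then lim_{d→∞} Φ_d / (d/ln d) = 1. -/
open Filter Real

lemma log_diff_ge (x : ℝ) (hx : 0 < x) : 1/(x+1) ≤ Real.log (x+1) - Real.log x := by
  have hx1 : (0:ℝ) < x + 1 := by linarith
  have h := Real.log_le_sub_one_of_pos (show (0:ℝ) < x/(x+1) by positivity)
  rw [Real.log_div (ne_of_gt hx) (ne_of_gt hx1)] at h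
  have h2 : x/(x+1) - 1 = -(1/(x+1)) := by field_simp; ring
  rw [h2] at h
  linarith

lemma log_diff_le (x : ℝ) (hx : 0 < x) : Real.log (x+1) - Real.log x ≤ 1/x := by
  have hx1 : (0:ℝ) < x + 1 := by linarith
  have h := Real.log_le_sub_one_of_pos (show (0:ℝ) < (x+1)/x by positivity)
  rw [Real.log_div (ne_of_gt hx1) (ne_of_gt hx)] at h
  have h2 : (x+1)/x - 1 = 1/x := by field_simp; ring
  rw [h2] at h
  linarith

lemma f_anti (d : ℕ) :
    StrictAntiOn (fun x : ℝ => (d:ℝ) * Real.log (x+1) - ((d:ℝ)+1) * Real.log x)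
      (Set.Ioi 0) := by
  have hderiv : ∀ x ∈ Set.Ioi (0:ℝ),
      HasDerivAt (fun x : ℝ => (d:ℝ) * Real.log (x+1) - ((d:ℝ)+1) * Real.log x)
        ((d:ℝ) * (x+1)⁻¹ - ((d:ℝ)+1) * x⁻¹) x := by
    intro x hx
    have hx0 : (0:ℝ) < x := hx
    have h1 : HasDerivAt (fun x : ℝ => Real.log (x+1)) ((x+1)⁻¹) x := by
      have := (Real.hasDerivAt_log (by positivity : x + 1 ≠ 0)).comp x
        ((hasDerivAt_id x).add_const 1)
      simpa [Function.comp_def] using this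
    have h2 : HasDerivAt Real.log x⁻¹ x := Real.hasDerivAt_log (ne_of_gt hx0)
    exact (h1.const_mul _).sub (h2.const_mul _)
  apply strictAntiOn_of_deriv_neg (convex_Ioi 0)
  · exact fun x hx => (hderiv x hx).continuousAt.continuousWithinAt
  · intro x hx
    rw [interior_Ioi] at hx
    rw [(hderiv x hx).deriv]
    have hx0 : (0:ℝ) < x := hx
    have h1 : (x+1)⁻¹ ≤ x⁻¹ := by gcongr; linarith
    have h2 : (0:ℝ) < x⁻¹ := by positivity
    have h3 : (0:ℝ) ≤ (d:ℝ) := Nat.cast_nonneg d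
    nlinarith

lemma key (d : ℕ) (Φ : ℝ) (hΦ : 0 < Φ) (heq : (Φ+1)^d = Φ^(d+1)) :
    (∀ a : ℝ, 0 < a → Real.log a ≤ (d:ℝ) * (Real.log (a+1) - Real.log a) → a ≤ Φ) ∧
    (∀ b : ℝ, 0 < b → (d:ℝ) * (Real.log (b+1) - Real.log b) ≤ Real.log b → Φ ≤ b) := by
  have hfΦ : (d:ℝ) * Real.log (Φ+1) - ((d:ℝ)+1) * Real.log Φ = 0 := by
    have := congrArg Real.log heq
    rw [Real.log_pow, Real.log_pow] at this
    push_cast at this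
    linarith
  constructor
  · intro a ha hcond
    by_contra h
    push_neg at h
    have hlt : (d:ℝ) * Real.log (a+1) - ((d:ℝ)+1) * Real.log a
        < (d:ℝ) * Real.log (Φ+1) - ((d:ℝ)+1) * Real.log Φ :=
      f_anti d (Set.mem_Ioi.mpr hΦ) (Set.mem_Ioi.mpr ha) h
    have e1 : ((d:ℝ)+1) * Real.log a = (d:ℝ) * Real.log a + Real.log a := by ring
    have e2 : (d:ℝ) * (Real.log (a+1) - Real.log a)
        = (d:ℝ) * Real.log (a+1) - (d:ℝ) * Real.log a := by ring
    linarith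
  · intro b hb hcond
    by_contra h
    push_neg at h
    have hlt : (d:ℝ) * Real.log (Φ+1) - ((d:ℝ)+1) * Real.log Φ
        < (d:ℝ) * Real.log (b+1) - ((d:ℝ)+1) * Real.log b :=
      f_anti d (Set.mem_Ioi.mpr hb) (Set.mem_Ioi.mpr hΦ) h
    have e1 : ((d:ℝ)+1) * Real.log b = (d:ℝ) * Real.log b + Real.log b := by ring
    have e2 : (d:ℝ) * (Real.log (b+1) - Real.log b)
        = (d:ℝ) * Real.log (b+1) - (d:ℝ) * Real.log b := by ring
    linarith

theorem stmt12 (Φ : ℕ → ℝ)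
    (hΦ : ∀ d : ℕ, 1 ≤ d → 0 < Φ d ∧ (Φ d + 1) ^ d = Φ d ^ (d + 1)) :
    Filter.Tendsto (fun d : ℕ => Φ d / ((d : ℝ) / Real.log d))
      Filter.atTop (nhds 1) := by
  rw [Metric.tendsto_nhds]
  intro ε hε
  set δ : ℝ := min (ε/2) (1/2) with hδdef
  have hδ0 : 0 < δ := lt_min (by linarith) (by norm_num)
  have hδ1 : δ ≤ 1/2 := min_le_right _ _
  have hδε : δ < ε := lt_of_le_of_lt (min_le_left _ _) (by linarith)
  have hlogT : Tendsto (fun d : ℕ => Real.log d) atTop atTop :=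
    Real.tendsto_log_atTop.comp tendsto_natCast_atTop_atTop
  have E1 : ∀ᶠ d : ℕ in atTop, 1 ≤ Real.log d := hlogT.eventually_ge_atTop 1
  have E2 : ∀ᶠ d : ℕ in atTop, Real.log d ≤ δ * d := by
    have h := Real.isLittleO_log_id_atTop.def hδ0
    have h2 := (tendsto_natCast_atTop_atTop (R := ℝ)).eventually h
    filter_upwards [h2] with d hd
    simp only [id_eq, Real.norm_eq_abs] at hd
    have habs : |(d:ℝ)| = (d:ℝ) := abs_of_nonneg (Nat.cast_nonneg d)
    rw [habs] at hd
    exact le_trans (le_abs_self _) hd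
  have E3 : ∀ᶠ d : ℕ in atTop,
      Real.log (Real.log d) ≤ (δ/(1+δ)) * Real.log d := by
    have hc : (0:ℝ) < δ/(1+δ) := by positivity
    have h := Real.isLittleO_log_id_atTop.def hc
    have h2 := hlogT.eventually h
    filter_upwards [h2, E1] with d hd h1
    simp only [id_eq, Real.norm_eq_abs] at hd
    have habs : |Real.log (d:ℝ)| = Real.log (d:ℝ) :=
      abs_of_nonneg (by linarith : (0:ℝ) ≤ Real.log d)
    rw [habs] at hd
    exact le_trans (le_abs_self _) hd
  filter_upwards [E1, E2, E3, eventually_ge_atTop 1] with d hL1 hL2 hL3 hd1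
  set L : ℝ := Real.log d with hLdef
  have hL0 : (0:ℝ) < L := lt_of_lt_of_le one_pos hL1
  have hd0 : (0:ℝ) < d := by exact_mod_cast hd1
  obtain ⟨hΦ0, hΦeq⟩ := hΦ d hd1
  obtain ⟨hkey1, hkey2⟩ := key d (Φ d) hΦ0 hΦeq
  have h1δ : (0:ℝ) < 1 - δ := by linarith
  set a : ℝ := (1-δ) * ((d:ℝ)/L) with hadef
  set b : ℝ := (1+δ) * ((d:ℝ)/L) with hbdef
  have ha0 : 0 < a := by
    apply mul_pos h1δ; positivity
  have hb0 : 0 < b := by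
    apply mul_pos (by linarith); positivity
  -- a ≤ d
  have had : a ≤ (d:ℝ) := by
    have h1 : (d:ℝ)/L ≤ d := by
      rw [div_le_iff₀ hL0]; nlinarith
    calc a ≤ 1 * ((d:ℝ)/L) := by
          apply mul_le_mul_of_nonneg_right (by linarith) (by positivity)
      _ = (d:ℝ)/L := one_mul _
      _ ≤ d := h1
  -- lower bound: a ≤ Φ d
  have hlow : a ≤ Φ d := by
    apply hkey1 a ha0
    have hla : Real.log a ≤ L := by
      rw [hLdef]; exact Real.log_le_log ha0 had
    have hmul : ((d:ℝ)/L) * L = d := div_mul_cancel₀ _ (ne_of_gt hL0)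
    have hstep : (a+1) * Real.log a ≤ (d:ℝ) := by
      calc (a+1) * Real.log a ≤ (a+1) * L := by
            apply mul_le_mul_of_nonneg_left hla (by linarith)
        _ = (1-δ) * (((d:ℝ)/L) * L) + L := by rw [hadef]; ring
        _ = (1-δ) * d + L := by rw [hmul]
        _ ≤ (1-δ) * d + δ * d := by linarith
        _ = d := by ring
    have hge : Real.log a ≤ (d:ℝ) / (a+1) := by
      rw [le_div_iff₀ (by linarith : (0:ℝ) < a+1)]
      linarith [hstep]
    calc Real.log a ≤ (d:ℝ) / (a+1) := hge
      _ = (d:ℝ) * (1/(a+1)) := by ring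
      _ ≤ (d:ℝ) * (Real.log (a+1) - Real.log a) := by
          apply mul_le_mul_of_nonneg_left (log_diff_ge a ha0) (Nat.cast_nonneg d)
  -- upper bound: Φ d ≤ b
  have hhigh : Φ d ≤ b := by
    apply hkey2 b hb0
    have hdb : (d:ℝ)/b = L/(1+δ) := by
      rw [hbdef]
      field_simp
    have hlogb : L - Real.log L ≤ Real.log b := by
      have h1 : (d:ℝ)/L ≤ b := by
        calc (d:ℝ)/L = 1 * ((d:ℝ)/L) := (one_mul _).symm
          _ ≤ b := by apply mul_le_mul_of_nonneg_right (by linarith) (by positivity)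
      have h2 : Real.log ((d:ℝ)/L) ≤ Real.log b :=
        Real.log_le_log (by positivity) h1
      rw [Real.log_div (ne_of_gt hd0) (ne_of_gt hL0)] at h2
      exact h2
    have hfrac : L/(1+δ) = L - (δ/(1+δ)) * L := by
      field_simp
      ring
    calc (d:ℝ) * (Real.log (b+1) - Real.log b)
        ≤ (d:ℝ) * (1/b) := by
          apply mul_le_mul_of_nonneg_left (log_diff_le b hb0) (Nat.cast_nonneg d)
      _ = (d:ℝ)/b := by ring
      _ = L/(1+δ) := hdb
      _ = L - (δ/(1+δ)) * L := hfrac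
      _ ≤ L - Real.log L := by linarith [hL3]
      _ ≤ Real.log b := by linarith [hlogb]
  -- conclude
  have hq : (0:ℝ) < (d:ℝ)/L := by positivity
  have haq : a / ((d:ℝ)/L) = 1 - δ := by
    rw [hadef, mul_div_assoc]
    rw [div_self (ne_of_gt hq)]
    ring
  have hbq : b / ((d:ℝ)/L) = 1 + δ := by
    rw [hbdef, mul_div_assoc]
    rw [div_self (ne_of_gt hq)]
    ring
  have hlow' : 1 - δ ≤ Φ d / ((d:ℝ)/L) := by
    rw [← haq]; gcongr
  have hhigh' : Φ d / ((d:ℝ)/L) ≤ 1 + δ := by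
    rw [← hbq]; gcongr
  rw [Real.dist_eq, abs_lt]
  constructor <;> [linarith; linarith]
end

section
/- For any integer d ≥ 9, with Φ = Φ_d the unique positive root of (x+1)^d = x^(d+1): ((Φ+1)^(d−1) − (Φ−1)^(d−1)) / ((Φ+1)^d − (Φ−1)^d) − 1/(Φ² − Φ) ≥ 1/d. -/
open Real

/-- For `1 ≤ y`, `log y ≤ (y - 1/y)/2`. -/
lemma aux_log_le_half {y : ℝ} (hy : 1 ≤ y) : Real.log y ≤ (y - 1/y) / 2 := by
  have hderiv : ∀ x : ℝ, 1 ≤ x →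
      HasDerivAt (fun t : ℝ => (t - 1/t)/2 - Real.log t) ((1 + 1/x^2)/2 - 1/x) x := by
    intro x hx
    have hx0 : x ≠ 0 := by intro h; rw [h] at hx; norm_num at hx
    have h1 : HasDerivAt (fun t : ℝ => 1/t) (-(x^2)⁻¹) x := by
      simpa [one_div] using hasDerivAt_inv hx0
    have h2 : HasDerivAt (fun t : ℝ => (t - 1/t)/2) ((1 + 1/x^2)/2) x := by
      have h3 := ((hasDerivAt_id x).sub h1).div_const 2
      exact h3.congr_deriv (by ring)
    rw [one_div x]; exact h2.sub (Real.hasDerivAt_log hx0)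
  have hmono : MonotoneOn (fun t : ℝ => (t - 1/t)/2 - Real.log t) (Set.Ici 1) := by
    apply monotoneOn_of_deriv_nonneg (convex_Ici 1)
    · intro x hx
      exact (hderiv x hx).continuousAt.continuousWithinAt
    · intro x hx
      rw [interior_Ici] at hx
      exact (hderiv x hx.le).differentiableAt.differentiableWithinAt
    · intro x hx
      rw [interior_Ici] at hx
      have hx1 : (1:ℝ) ≤ x := hx.le
      rw [(hderiv x hx1).deriv]
      have hx0 : (0:ℝ) < x := lt_trans one_pos hx
      have heq : (1 + 1/x^2)/2 - 1/x = (x-1)^2/(2*x^2) := by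
        field_simp
        ring
      rw [heq]
      positivity
  have h0 := hmono (Set.self_mem_Ici) (Set.mem_Ici.2 hy) hy
  simp only [Real.log_one] at h0
  norm_num at h0
  rw [one_div]
  linarith

set_option maxHeartbeats 1000000 in
theorem stmt13 (d : ℕ) (hd : 9 ≤ d) (Φ : ℝ) (hΦ : 0 < Φ)
    (hroot : (Φ + 1) ^ d = Φ ^ (d + 1)) :
    ((Φ + 1) ^ (d - 1) - (Φ - 1) ^ (d - 1)) / ((Φ + 1) ^ d - (Φ - 1) ^ d)
      - 1 / (Φ ^ 2 - Φ) ≥ 1 / (d : ℝ) := by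
  have hd0 : (0:ℝ) < (d:ℝ) := by
    have : (9:ℝ) ≤ (d:ℝ) := by exact_mod_cast hd
    linarith
  -- Φ > 1
  have hΦ1 : 1 < Φ := by
    have h1 : Φ ^ d < (Φ+1) ^ d := by
      apply pow_lt_pow_left₀ (by linarith) hΦ.le (by omega)
    rw [hroot, pow_succ] at h1
    nlinarith [pow_pos hΦ d]
  have hΦ0 : Φ ≠ 0 := ne_of_gt hΦ
  -- ((Φ+1)/Φ)^d = Φ
  have hbase : ((Φ+1)/Φ) ^ d = Φ := by
    rw [div_pow, hroot, pow_succ]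
    exact mul_div_cancel_left₀ Φ (by positivity)
  -- Φ ≥ 5.05
  have hΦ5 : (5.05:ℝ) ≤ Φ := by
    by_contra h
    push_neg at h
    have h2 : ((6.05:ℝ)/5.05) ≤ (Φ+1)/Φ := by
      rw [div_le_div_iff₀ (by norm_num) hΦ]
      nlinarith
    have h3 : ((6.05:ℝ)/5.05) ^ 9 ≤ ((6.05:ℝ)/5.05) ^ d :=
      pow_le_pow_right₀ (by norm_num) hd
    have h4 : ((6.05:ℝ)/5.05) ^ d ≤ ((Φ+1)/Φ) ^ d :=
      pow_le_pow_left₀ (by norm_num) h2 d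
    have h5 : (5.05:ℝ) < ((6.05:ℝ)/5.05) ^ 9 := by norm_num
    rw [hbase] at h4
    linarith
  have hu : (0:ℝ) ≤ Φ - 5.05 := by linarith
  -- log Φ ≥ 1.61
  have hlogΦ : (1.61:ℝ) ≤ Real.log Φ := by
    rw [Real.le_log_iff_exp_le (by positivity)]
    have h61 : Real.exp 0.61 ≤ 1.8405 := by
      have hb := Real.exp_bound' (x := 0.61) (by norm_num) (by norm_num) (n := 5) (by norm_num)
      have hsum : (∑ m ∈ Finset.range 5, (0.61:ℝ) ^ m / m.factorial)
          + (0.61:ℝ) ^ 5 * (5 + 1) / (Nat.factorial 5 * 5) ≤ 1.8405 := by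
        simp [Finset.sum_range_succ, Nat.factorial]
        norm_num
      linarith
    have h1 : Real.exp 1 < 2.7182818286 := Real.exp_one_lt_d9
    have hsplit : Real.exp 1.61 = Real.exp 1 * Real.exp 0.61 := by
      rw [← Real.exp_add]; norm_num
    have hpos : (0:ℝ) < Real.exp 0.61 := Real.exp_pos _
    nlinarith [hsplit, h1, h61, hpos]
  -- d * log((Φ+1)/Φ) = log Φ
  have hlog : (d:ℝ) * Real.log ((Φ+1)/Φ) = Real.log Φ := by
    have h := congrArg Real.log hroot
    rw [Real.log_pow, Real.log_pow] at h
    rw [Real.log_div (by linarith) hΦ0]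
    push_cast at h
    ring_nf
    ring_nf at h
    linarith
  -- log((Φ+1)/Φ) ≤ (2Φ+1)/(2Φ²+2Φ)
  have hlb : Real.log ((Φ+1)/Φ) ≤ (2*Φ+1)/(2*Φ^2+2*Φ) := by
    have hy1 : (1:ℝ) ≤ (Φ+1)/Φ := by
      rw [le_div_iff₀ hΦ]; linarith
    have h := aux_log_le_half hy1
    have heq : ((Φ+1)/Φ - 1/((Φ+1)/Φ))/2 = (2*Φ+1)/(2*Φ^2+2*Φ) := by
      field_simp
      ring
    rw [heq] at h
    exact h
  -- main numeric bound on d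
  have hD : (1.61:ℝ) * (2*Φ^2+2*Φ) ≤ (d:ℝ) * (2*Φ+1) := by
    have hpos : (0:ℝ) < 2*Φ^2+2*Φ := by positivity
    have h1 : Real.log Φ ≤ (d:ℝ) * ((2*Φ+1)/(2*Φ^2+2*Φ)) := by
      rw [← hlog]
      exact mul_le_mul_of_nonneg_left hlb (by positivity)
    have h2 : (1.61:ℝ) ≤ (d:ℝ) * (2*Φ+1) / (2*Φ^2+2*Φ) := by
      rw [mul_div_assoc]
      linarith
    rw [le_div_iff₀ hpos] at h2
    linarith
  -- slack
  have hslack : (0:ℝ) ≤ (d:ℝ)*(2*Φ+1) - 1.61*(2*Φ^2+2*Φ) := by linarith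
  -- quadratic positivity
  have hquad : (0:ℝ) ≤ Φ^2 - 2*Φ - 1 := by nlinarith
  -- G2 ≥ 0 (shifted polynomial, nonneg coefficients)
  have hG2 : (0:ℝ) ≤ 1.61*(2*Φ^2+2*Φ)*(Φ^2-2*Φ-1) - (2*Φ+1)*(Φ+1)*(Φ^2-Φ) := by
    have hid : 1.61*(2*Φ^2+2*Φ)*(Φ^2-2*Φ-1) - (2*Φ+1)*(Φ+1)*(Φ^2-Φ)
        = 347333041/8000000 + (5650899/25000)*(Φ-5.05) + (1150853/10000)*(Φ-5.05)^2
          + (2553/125)*(Φ-5.05)^3 + (61/50)*(Φ-5.05)^4 := by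
      ring
    rw [hid]
    positivity
  -- cA ≥ 0
  have hcA : (0:ℝ) ≤ (d:ℝ)*(Φ^2-2*Φ-1) - (Φ+1)*(Φ^2-Φ) := by
    have hp := mul_nonneg hslack hquad
    have h3 : (0:ℝ) ≤ (2*Φ+1) * ((d:ℝ)*(Φ^2-2*Φ-1) - (Φ+1)*(Φ^2-Φ)) := by nlinarith [hp, hG2]
    nlinarith [h3, hΦ5]
  -- dcoef ≥ 0
  have hdcoef : (0:ℝ) ≤ Φ^4*(Φ^2-2*Φ-1) - (Φ+1)^2*(Φ-1)^2 := by
    have hid : Φ^4*(Φ^2-2*Φ-1) - (Φ+1)^2*(Φ-1)^2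
        = 561068129761/64000000 + (19508099803/1600000)*(Φ-5.05) + (220028163/32000)*(Φ-5.05)^2
          + (810121/400)*(Φ-5.05)^3 + (26403/80)*(Φ-5.05)^4 + (283/10)*(Φ-5.05)^5
          + (Φ-5.05)^6 := by
      ring
    rw [hid]
    positivity
  -- G ≥ 0
  have hG : (0:ℝ) ≤ 1.61*(2*Φ^2+2*Φ)*(Φ^4*(Φ^2-2*Φ-1) - (Φ+1)^2*(Φ-1)^2)
      - (2*Φ+1)*(Φ^4*(Φ+1)*(Φ^2-Φ) - (Φ+1)^2*(Φ-1)*(Φ^2-Φ)) := by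
    have hid : 1.61*(2*Φ^2+2*Φ)*(Φ^4*(Φ^2-2*Φ-1) - (Φ+1)^2*(Φ-1)^2)
        - (2*Φ+1)*(Φ^4*(Φ+1)*(Φ^2-Φ) - (Φ+1)^2*(Φ-1)*(Φ^2-Φ))
        = 3618564681377041/1280000000000 + (2235134016150737/16000000000)*(Φ-5.05)
          + (36722646570243/200000000)*(Φ-5.05)^2 + (4175144912929/40000000)*(Φ-5.05)^3
          + (26410963057/800000)*(Φ-5.05)^4 + (626523499/100000)*(Φ-5.05)^5
          + (1782771/2500)*(Φ-5.05)^6 + (11267/250)*(Φ-5.05)^7 + (61/50)*(Φ-5.05)^8 := by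
      ring
    rw [hid]
    positivity
  -- hcond : Φ⁴ cA + (Φ+1)² cB ≥ 0
  have hcond : (0:ℝ) ≤ Φ^4*((d:ℝ)*(Φ^2-2*Φ-1) - (Φ+1)*(Φ^2-Φ))
      + (Φ+1)^2*((Φ-1)*(Φ^2-Φ) - (d:ℝ)*(Φ-1)^2) := by
    have hp := mul_nonneg hdcoef hslack
    have h3 : (0:ℝ) ≤ (2*Φ+1) * (Φ^4*((d:ℝ)*(Φ^2-2*Φ-1) - (Φ+1)*(Φ^2-Φ))
        + (Φ+1)^2*((Φ-1)*(Φ^2-Φ) - (d:ℝ)*(Φ-1)^2)) := by linarith [hp, hG]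
    have h2p : (0:ℝ) < 2*Φ+1 := by linarith
    by_contra hc
    push_neg at hc
    have h5 := mul_pos h2p (neg_pos.mpr hc)
    nlinarith [h3, h5]
  -- switch to e = d - 1
  obtain ⟨e, rfl⟩ : ∃ e, d = e + 1 := ⟨d - 1, by omega⟩
  have he8 : 8 ≤ e := by omega
  set A : ℝ := (Φ+1)^e with hA_def
  set B : ℝ := (Φ-1)^e with hB_def
  have hA : (0:ℝ) < A := by positivity
  have hB : (0:ℝ) < B := by
    have : (0:ℝ) < Φ - 1 := by linarith
    positivity
  have hBA : B < A := by
    apply pow_lt_pow_left₀ (by linarith) (by linarith) (by omega)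
  -- hq : Φ^4 * B ≤ (Φ+1)^2 * A
  have hq : Φ^4 * B ≤ (Φ+1)^2 * A := by
    have hq0 : ((Φ-1)*(Φ+1))^e ≤ (Φ^2)^e := by
      apply pow_le_pow_left₀ (by nlinarith) (by nlinarith) e
    have hq1 : Φ^4 * B * A ≤ Φ^4 * (Φ^2)^e := by
      have : Φ^4 * B * A = Φ^4 * ((Φ-1)*(Φ+1))^e := by
        rw [mul_pow]; ring
      rw [this]
      have h4 : (0:ℝ) ≤ Φ^4 := by positivity
      exact mul_le_mul_of_nonneg_left hq0 h4
    have hq2 : (Φ+1)^2 * A * A = Φ^4 * (Φ^2)^e := by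
      have h5 : (Φ+1)^2 * A * A = ((Φ+1)^(e+1))^2 := by
        rw [hA_def]; ring
      rw [h5, hroot]
      rw [← pow_mul, ← pow_mul]
      ring_nf
    have hq3 : Φ^4 * B * A ≤ (Φ+1)^2 * A * A := by rw [hq2]; exact hq1
    exact le_of_mul_le_mul_right hq3 hA
  -- key inequality
  have hkey : (0:ℝ) ≤ (((e:ℝ)+1)*(Φ^2-2*Φ-1) - (Φ+1)*(Φ^2-Φ))*A
      + ((Φ-1)*(Φ^2-Φ) - ((e:ℝ)+1)*(Φ-1)^2)*B := by
    have hde : ((e+1:ℕ):ℝ) = (e:ℝ)+1 := by push_cast; ring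
    rw [hde] at hcA hcond
    have ht1 : (0:ℝ) ≤ (((e:ℝ)+1)*(Φ^2-2*Φ-1) - (Φ+1)*(Φ^2-Φ)) * ((Φ+1)^2*A - Φ^4*B) :=
      mul_nonneg hcA (by linarith)
    have ht2 : (0:ℝ) ≤ (Φ^4*(((e:ℝ)+1)*(Φ^2-2*Φ-1) - (Φ+1)*(Φ^2-Φ))
        + (Φ+1)^2*((Φ-1)*(Φ^2-Φ) - ((e:ℝ)+1)*(Φ-1)^2)) * B := mul_nonneg hcond hB.le
    have h4 : (0:ℝ) ≤ (Φ+1)^2 * ((((e:ℝ)+1)*(Φ^2-2*Φ-1) - (Φ+1)*(Φ^2-Φ))*A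
        + ((Φ-1)*(Φ^2-Φ) - ((e:ℝ)+1)*(Φ-1)^2)*B) := by linarith [ht1, ht2]
    have h2p : (0:ℝ) < (Φ+1)^2 := by positivity
    by_contra hc
    push_neg at hc
    have h5 := mul_pos h2p (neg_pos.mpr hc)
    nlinarith [h4, h5]
  -- denominators
  have hφ2 : (0:ℝ) < Φ^2 - Φ := by nlinarith
  have hD0 : (0:ℝ) < (Φ+1)*A - (Φ-1)*B := by nlinarith [hA, hB, hBA, hΦ1]
  have hd0' : (0:ℝ) < ((e:ℝ)+1) := by positivity
  -- final comparison
  have hgoal2 : 1/((e:ℝ)+1) + 1/(Φ^2-Φ) ≤ (A - B)/((Φ+1)*A - (Φ-1)*B) := by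
    rw [div_add_div _ _ (ne_of_gt hd0') (ne_of_gt hφ2), div_le_div_iff₀ (by positivity) hD0]
    nlinarith [hkey]

  have hform : (Φ+1)^(e+1) - (Φ-1)^(e+1) = (Φ+1)*A - (Φ-1)*B := by
    rw [hA_def, hB_def, pow_succ, pow_succ]; ring
  have hsub : e + 1 - 1 = e := by omega
  rw [hsub, hform]
  have hcast : ((e+1:ℕ):ℝ) = (e:ℝ)+1 := by push_cast; ring
  rw [hcast]
  linarith [hgoal2]
end

section
/- For any integer d ≥ 2, the function h(t) = ((t+1)^d − t^d) / ((t+1)^(d−1) − t^(d−1)) is strictly increasing on (0, ∞). -/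
open Finset

theorem stmt14 (d : ℕ) (hd : 2 ≤ d) :
    StrictMonoOn
      (fun t : ℝ => ((t + 1) ^ d - t ^ d) / ((t + 1) ^ (d - 1) - t ^ (d - 1)))
      (Set.Ioi (0 : ℝ)) := by
  obtain ⟨e, rfl⟩ : ∃ e, d = e + 1 := ⟨d - 1, by omega⟩
  have he : 1 ≤ e := by omega
  have key : ∀ t : ℝ, 0 < t →
      ((t + 1) ^ (e + 1) - t ^ (e + 1)) / ((t + 1) ^ ((e + 1) - 1) - t ^ ((e + 1) - 1))
      = (∑ j ∈ range (e + 1), (t / (t + 1)) ^ j) / (1 - (t / (t + 1)) ^ e) := by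
    intro t ht
    have ht1 : (0:ℝ) < t + 1 := by linarith
    have hr1 : t / (t + 1) < 1 := by rw [div_lt_one ht1]; linarith
    have hden : t ^ e < (t + 1) ^ e := pow_lt_pow_left₀ (by linarith) ht.le (by omega)
    simp only [Nat.add_sub_cancel]
    rw [geom_sum_eq (by linarith), div_pow, div_pow]
    rw [div_eq_div_iff (by linarith)]
    · field_simp
      ring
    · have h1 : t ^ e / (t + 1) ^ e < 1 := by
        rw [div_lt_one (by positivity)]; exact hden
      intro hcontra
      rw [sub_eq_zero] at hcontra
      linarith
  intro a ha b hb hab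
  simp only [Set.mem_Ioi] at ha hb
  simp only [key a ha, key b hb]
  set r := a / (a + 1) with hrdef
  set s := b / (b + 1) with hsdef
  have hr0 : 0 < r := by positivity
  have hs0 : 0 < s := by positivity
  have hr1 : r < 1 := by rw [hrdef, div_lt_one (by linarith)]; linarith
  have hs1 : s < 1 := by rw [hsdef, div_lt_one (by linarith)]; linarith
  have hrs : r < s := by
    rw [hrdef, hsdef, div_lt_div_iff₀ (by linarith) (by linarith)]
    nlinarith
  have hsum : ∑ j ∈ range (e + 1), r ^ j < ∑ j ∈ range (e + 1), s ^ j := by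
    apply Finset.sum_lt_sum
    · intro i _
      exact pow_le_pow_left₀ hr0.le hrs.le i
    · exact ⟨1, by simp; omega, by simpa using hrs⟩
  have hsumpos : 0 < ∑ j ∈ range (e + 1), r ^ j := by positivity
  have hpe : r ^ e < s ^ e := pow_lt_pow_left₀ hrs hr0.le (by omega)
  have hd1 : 0 < 1 - s ^ e := by
    have : s ^ e < 1 := pow_lt_one₀ hs0.le hs1 (by omega)
    linarith
  have hd2 : 1 - s ^ e < 1 - r ^ e := by linarith
  rw [div_lt_div_iff₀ (by linarith) (by linarith)]
  nlinarith [mul_lt_mul_of_pos_right hsum hd1,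
    mul_lt_mul_of_pos_left hd2 (lt_trans hsumpos hsum)]
end

section
/- For any integer d ≥ 2, the function f(x, y) = ((y+x+1)^d − (y+x)^d) / ((y+1)^d − y^d) defined on (0,∞)² is strictly decreasing with respect to y for each fixed x > 0. -/
/-- Positivity of `(t+1)^k - t^k` for `t > 0`, `k ≥ 1`. -/
lemma aux_pos (k : ℕ) (hk : 1 ≤ k) {t : ℝ} (ht : 0 < t) :
    0 < (t + 1) ^ k - t ^ k := by
  have : t ^ k < (t + 1) ^ k :=
    pow_lt_pow_left₀ (by linarith) ht.le (by omega)
  linarith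

/-- Key inequality: `g(b) A(a) > g(a) A(b)` for `0 < a < b`, where
`g(t) = (t+1)^d - t^d` and `A(t) = (t+1)^(d-1) - t^(d-1)`. -/
lemma aux_key (d : ℕ) (hd : 2 ≤ d) {a b : ℝ} (ha : 0 < a) (hab : a < b) :
    ((a + 1) ^ d - a ^ d) * ((b + 1) ^ (d - 1) - b ^ (d - 1)) <
    ((b + 1) ^ d - b ^ d) * ((a + 1) ^ (d - 1) - a ^ (d - 1)) := by
  have hb : 0 < b := ha.trans hab
  obtain ⟨e, rfl⟩ : ∃ e, d = e + 1 := ⟨d - 1, by omega⟩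
  have he : 1 ≤ e := by omega
  simp only [Nat.add_sub_cancel]
  have hAa : 0 < (a + 1) ^ e - a ^ e := aux_pos e he ha
  have hAb : 0 < (b + 1) ^ e - b ^ e := aux_pos e he hb
  have h3 : (a * (b + 1)) ^ e < (b * (a + 1)) ^ e :=
    pow_lt_pow_left₀ (by nlinarith) (by positivity) (by omega)
  rw [mul_pow, mul_pow] at h3
  rw [pow_succ (a + 1), pow_succ a, pow_succ (b + 1), pow_succ b]
  nlinarith [mul_pos (mul_pos (sub_pos.2 hab) hAa) hAb]

theorem stmt15 (d : ℕ) (hd : 2 ≤ d) (x : ℝ) (hx : 0 < x) :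
    StrictAntiOn
      (fun y : ℝ => ((y + x + 1) ^ d - (y + x) ^ d) / ((y + 1) ^ d - y ^ d))
      (Set.Ioi (0 : ℝ)) := by
  have hden : ∀ y : ℝ, 0 < y → (y + 1) ^ d - y ^ d ≠ 0 := fun y hy =>
    ne_of_gt (aux_pos d (by omega) hy)
  apply strictAntiOn_of_deriv_neg (convex_Ioi 0)
  · apply ContinuousOn.div
    · fun_prop
    · fun_prop
    · intro y hy
      exact hden y hy
  · intro y hy
    rw [interior_Ioi] at hy
    have hy : (0 : ℝ) < y := hy
    have hxy : 0 < y + x := by linarith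
    -- derivatives
    have hp : HasDerivAt (fun y : ℝ => (y + x + 1) ^ d - (y + x) ^ d)
        ((d : ℝ) * (y + x + 1) ^ (d - 1) * 1 - (d : ℝ) * (y + x) ^ (d - 1) * 1) y := by
      exact ((((hasDerivAt_id y).add_const x).add_const 1).pow d).sub
        (((hasDerivAt_id y).add_const x).pow d)
    have hq : HasDerivAt (fun y : ℝ => (y + 1) ^ d - y ^ d)
        ((d : ℝ) * (y + 1) ^ (d - 1) * 1 - (d : ℝ) * y ^ (d - 1) * 1) y := by
      exact (((hasDerivAt_id y).add_const 1).pow d).sub ((hasDerivAt_id y).pow d)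
    have hf : deriv (fun y : ℝ => ((y + x + 1) ^ d - (y + x) ^ d) / ((y + 1) ^ d - y ^ d)) y = _ :=
      (hp.div hq (hden y hy)).deriv
    rw [hf]
    apply div_neg_of_neg_of_pos
    · have key := aux_key d hd hy (show y < y + x by linarith)
      have hd0 : (0 : ℝ) < d := by positivity
      have expand :
          ((d : ℝ) * (y + x + 1) ^ (d - 1) * 1 - (d : ℝ) * (y + x) ^ (d - 1) * 1) *
              ((y + 1) ^ d - y ^ d) -
            ((y + x + 1) ^ d - (y + x) ^ d) *
              ((d : ℝ) * (y + 1) ^ (d - 1) * 1 - (d : ℝ) * y ^ (d - 1) * 1) =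
          (d : ℝ) * (((y + 1) ^ d - y ^ d) * ((y + x + 1) ^ (d - 1) - (y + x) ^ (d - 1)) -
            ((y + x + 1) ^ d - (y + x) ^ d) * ((y + 1) ^ (d - 1) - y ^ (d - 1))) := by
        ring
      rw [expand]
      have : ((y + 1) ^ d - y ^ d) * ((y + x + 1) ^ (d - 1) - (y + x) ^ (d - 1)) -
          ((y + x + 1) ^ d - (y + x) ^ d) * ((y + 1) ^ (d - 1) - y ^ (d - 1)) < 0 := by
        nlinarith [key]
      exact mul_neg_of_pos_of_neg hd0 this
    · have := aux_pos d (by omega) hy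
      positivity
end

section
/- For any integer d ≥ 2, the function t ↦ (t^d − (t−1)^d)/(t^d − t·(t−1)^(d−1)) is strictly increasing on (1, ∞). -/
lemma stmt16_key (e : ℕ) (he : 1 ≤ e) (t : ℝ) (ht : 1 < t) :
    (t ^ (e+1) - (t - 1) ^ (e+1)) / (t ^ (e+1) - t * (t - 1) ^ e)
      = 1 + (∑ j ∈ Finset.range e, (t / (t - 1)) ^ (j+1))⁻¹ := by
  have hu : 0 < t - 1 := by linarith
  have hune : (t - 1) ≠ 0 := ne_of_gt hu
  have hx : 1 < t / (t - 1) := (one_lt_div hu).2 (by linarith)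
  have hxne : t / (t - 1) ≠ 1 := ne_of_gt hx
  have hpow : (t-1)^e < t^e := pow_lt_pow_left₀ (by linarith) (le_of_lt hu) (by omega)
  have hupow : (0:ℝ) < (t-1)^e := pow_pos hu e
  have ht0 : t ≠ 0 := by linarith
  have hS : ∑ j ∈ Finset.range e, (t / (t - 1)) ^ (j+1)
      = t * (t^e - (t-1)^e) / (t-1)^e := by
    have h1 : ∑ j ∈ Finset.range e, (t / (t - 1)) ^ (j+1)
        = (t/(t-1)) * ∑ j ∈ Finset.range e, (t / (t - 1)) ^ j := by
      rw [Finset.mul_sum]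
      exact Finset.sum_congr rfl fun j _ => by ring
    rw [h1, geom_sum_eq hxne, div_pow]
    field_simp
    ring
  rw [hS]
  have hDpos : (0:ℝ) < t * (t^e - (t-1)^e) := mul_pos (by linarith) (by linarith)
  have hD : t ^ (e+1) - t * (t - 1) ^ e = t * (t^e - (t-1)^e) := by ring
  rw [hD]
  have hne : t * (t^e - (t-1)^e) ≠ 0 := ne_of_gt hDpos
  have hX : t^e - (t-1)^e ≠ 0 := sub_ne_zero.2 (ne_of_gt hpow)
  field_simp
  ring

theorem stmt16 (d : ℕ) (hd : 2 ≤ d) :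
    StrictMonoOn
      (fun t : ℝ => (t ^ d - (t - 1) ^ d) / (t ^ d - t * (t - 1) ^ (d - 1)))
      (Set.Ioi (1 : ℝ)) := by
  obtain ⟨e, rfl⟩ : ∃ e, d = e + 1 := ⟨d - 1, by omega⟩
  have he : 1 ≤ e := by omega
  intro a ha b hb hab
  simp only [Set.mem_Ioi] at ha hb
  simp only [Nat.add_sub_cancel]
  rw [stmt16_key e he a ha, stmt16_key e he b hb]
  have hua : 0 < a - 1 := by linarith
  have hub : 0 < b - 1 := by linarith
  have hxb : 1 < b / (b - 1) := (one_lt_div hub).2 (by linarith)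
  have hxab : b / (b - 1) < a / (a - 1) := by
    rw [div_lt_div_iff₀ hub hua]
    nlinarith
  have hSb : (0:ℝ) < ∑ j ∈ Finset.range e, (b / (b - 1)) ^ (j+1) := by
    apply Finset.sum_pos
    · intro j _
      exact pow_pos (by linarith) _
    · exact Finset.nonempty_range_iff.2 (by omega)
  have hSab : ∑ j ∈ Finset.range e, (b / (b - 1)) ^ (j+1)
      < ∑ j ∈ Finset.range e, (a / (a - 1)) ^ (j+1) := by
    apply Finset.sum_lt_sum_of_nonempty (Finset.nonempty_range_iff.2 (by omega))
    intro j _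
    exact pow_lt_pow_left₀ hxab (by linarith) (by omega)
  have : (∑ j ∈ Finset.range e, (a / (a - 1)) ^ (j+1))⁻¹
      < (∑ j ∈ Finset.range e, (b / (b - 1)) ^ (j+1))⁻¹ :=
    inv_strictAnti₀ hSb hSab
  linarith
end
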